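/- If for every player i and all actions a ≠ b the lim sup of the positive part of the perturbed conditional regrets satisfies lim sup_{t→∞} CR^i_{t,+}(a,b) ≤ 0, and if the sequence of empirical distributions x_t has a convergent subsequence with limit Ψ, and the disturbance sequence visits every d ∈ {1,...,D} with positive limiting frequency, then under the stationary-disturbance identification of the paper, every limit point Ψ of (x_t) belongs to the RCE set when each fixed-d regret converges to zero. -/
import Mathlib


open Finset Filter

/-- if the positive parts of the per-disturbance conditional
regrets have nonpositive lim sup, and along a subsequence `φ` the
per-disturbance empirical distributions converge to `Ψ d`, then each limit
point `Ψ d` satisfies the `d`-th family of correlated-equilibrium inequalities,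
i.e. the limit belongs to the RCE set. -/
theorem limit_points_in_rce
    {ι : Type*} [Fintype ι] [DecidableEq ι]
    (U : ι → Type*) [∀ i, Fintype (U i)] [∀ i, DecidableEq (U i)]
    (D : ℕ) (c : Fin D → ι → (∀ i, U i) → ℝ)
    (u : ℕ → (∀ i, U i)) (dseq : ℕ → Fin D)
    (φ : ℕ → ℕ) (hφ : StrictMono φ)
    (Ψ : Fin D → (∀ i, U i) → ℝ)
    (hreg : ∀ (d : Fin D) (i : ι) (a b : U i), a ≠ b →
      Filter.limsup (fun t : ℕ =>
        max 0 ((1 / (t : ℝ)) * ∑ τ ∈ Finset.range t,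
          (if u τ i = a ∧ dseq τ = d then
            c d i (u τ) - c d i (Function.update (u τ) i b) else 0)))
        atTop ≤ 0)
    (hconv : ∀ (d : Fin D) (v : ∀ i, U i),
      Tendsto (fun t : ℕ =>
          (((Finset.range (φ t)).filter
              (fun τ => u τ = v ∧ dseq τ = d)).card : ℝ) / (φ t : ℝ))
        atTop (nhds (Ψ d v))) :
    ∀ (d : Fin D) (i : ι) (a b : U i), a ≠ b →
      ∑ v ∈ univ.filter (fun v => v i = a),
        Ψ d v * (c d i v - c d i (Function.update v i b)) ≤ 0 := by
  intro d i a b hab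
  set g : (∀ i, U i) → ℝ := fun v => c d i v - c d i (Function.update v i b) with hg
  set S : ℝ := ∑ v ∈ univ.filter (fun v => v i = a), Ψ d v * g v with hS
  set f : ℕ → ℝ := fun t =>
    max 0 ((1 / (t : ℝ)) * ∑ τ ∈ Finset.range t,
      (if u τ i = a ∧ dseq τ = d then g (u τ) else 0)) with hf
  -- Key identity
  have key : ∀ t : ℕ,
      (1 / (t : ℝ)) * ∑ τ ∈ Finset.range t,
        (if u τ i = a ∧ dseq τ = d then g (u τ) else 0)
      = ∑ v ∈ univ.filter (fun v => v i = a),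
          ((((Finset.range t).filter (fun τ => u τ = v ∧ dseq τ = d)).card : ℝ) / (t : ℝ))
            * g v := by
    intro t
    have step1 : ∀ τ : ℕ,
        (if u τ i = a ∧ dseq τ = d then g (u τ) else 0)
        = ∑ v ∈ univ.filter (fun v => v i = a),
            (if u τ = v ∧ dseq τ = d then g v else 0) := by
      intro τ
      by_cases h : u τ i = a ∧ dseq τ = d
      · rw [if_pos h]
        rw [Finset.sum_eq_single_of_mem (u τ)
          (by simp [h.1]) ?_, if_pos ⟨rfl, h.2⟩]
        intro v hv hne
        rw [if_neg]
        rintro ⟨h1, -⟩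
        exact hne h1.symm
      · rw [if_neg h, eq_comm]
        apply Finset.sum_eq_zero
        intro v hv
        rw [if_neg]
        rintro ⟨h1, h2⟩
        apply h
        refine ⟨?_, h2⟩
        simp only [Finset.mem_filter] at hv
        rw [h1]; exact hv.2
    rw [Finset.sum_congr rfl fun τ _ => step1 τ, Finset.sum_comm, Finset.mul_sum]
    refine Finset.sum_congr rfl fun v _ => ?_
    rw [← Finset.sum_filter, Finset.sum_const, nsmul_eq_mul]
    ring
  -- Convergence of the rewritten sum along the subsequence
  have hsum : Tendsto (fun n : ℕ =>
      ∑ v ∈ univ.filter (fun v => v i = a),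
        ((((Finset.range (φ n)).filter (fun τ => u τ = v ∧ dseq τ = d)).card : ℝ) / (φ n : ℝ))
          * g v) atTop (nhds S) := by
    rw [hS]
    exact tendsto_finset_sum _ fun v _ => (hconv d v).mul_const (g v)
  have ftend : Tendsto (fun n => f (φ n)) atTop (nhds (max 0 S)) := by
    have : (fun n => f (φ n)) = fun n =>
        max 0 (∑ v ∈ univ.filter (fun v => v i = a),
          ((((Finset.range (φ n)).filter (fun τ => u τ = v ∧ dseq τ = d)).card : ℝ) / (φ n : ℝ))
            * g v) := by
      funext n; rw [hf]; simp only [key (φ n)]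
    rw [this]
    exact tendsto_const_nhds.max hsum
  -- f is bounded above
  have hbdd : IsBoundedUnder (· ≤ ·) atTop f := by
    refine isBoundedUnder_of ⟨max 0 (∑ v : (∀ i, U i), |g v|), fun t => ?_⟩
    simp only [hf]
    refine max_le_max (le_refl (0:ℝ)) ?_
    rcases Nat.eq_zero_or_pos t with ht | ht
    · subst ht
      simp only [Finset.range_zero, Finset.sum_empty, mul_zero]
      positivity
    · rw [div_mul_eq_mul_div, one_mul, div_le_iff₀ (by positivity)]
      calc ∑ τ ∈ Finset.range t, (if u τ i = a ∧ dseq τ = d then g (u τ) else 0)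
          ≤ ∑ τ ∈ Finset.range t, ∑ v : (∀ i, U i), |g v| := by
            refine Finset.sum_le_sum fun τ _ => ?_
            split_ifs with h
            · exact le_trans (le_abs_self _)
                (Finset.single_le_sum (f := fun v => |g v|)
                  (fun v _ => abs_nonneg _) (Finset.mem_univ (u τ)))
            · positivity
        _ = (∑ v : (∀ i, U i), |g v|) * t := by
            rw [Finset.sum_const, Finset.card_range, nsmul_eq_mul]; ring
  -- Conclude max 0 S ≤ 0
  have hmax : max 0 S ≤ 0 := by
    refine le_of_forall_pos_le_add fun ε hε => ?_
    have hfreq : ∃ᶠ t in atTop, max 0 S - ε ≤ f t := by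
      refine (hφ.tendsto_atTop).frequently ?_
      refine ((ftend.eventually (eventually_ge_nhds (by linarith : max 0 S - ε < max 0 S)))).frequently
    have := le_limsup_of_frequently_le hfreq hbdd
    have hls := hreg d i a b hab
    have : max 0 S - ε ≤ 0 := le_trans this hls
    linarith
  exact le_trans (le_max_right 0 S) hmax
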